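/- arXiv:2009.05630 — 3 statements merged into one kernel-verified Lean document; each statement's English description precedes it below -/
import Mathlib

section
/- Let α > 0 and t > 0 be real numbers, and let ψ₁, ψ₂ : ℚ_p^n → ℂ be radial functions such that: (a) Φ(ξ) := max{|ψ₁(ξ)|, |ψ₂(ξ)|} > 0 for all ξ ∈ ℚ_p^n, and (b) |ψ₁| and |ψ₂| are increasing with respect to the norm, i.e. ‖x‖_p ≤ ‖y‖_p implies |ψ_i(x)| ≤ |ψ_i(y)| for i = 1, 2. Let x ∈ ℚ_p^n with x ≠ 0, let ξ_j ∈ ℚ_p^n (j = 0, 1, 2, …) be any points with ‖ξ_j‖_p = ‖x‖_p^{−1} p^{−j}, and let η ∈ ℚ_p^n be any point with ‖η‖_p = ‖x‖_p^{−1} p. Then the heat-kernel value Z(x,t) := ‖x‖_p^{−n} · [ (1 − p^{−n}) Σ_{j=0}^{∞} p^{−nj} exp(−t · Φ(ξ_j)^{−α}) − exp(−t · Φ(η)^{−α}) ] satisfies Z(x,t) ≤ 0. -/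
/-! Every `ξ_j` is no larger than `η`, so by monotonicity each exponential in the series is at
most `E := exp (-t Φ(η)^{-α})`; the series is then dominated by the geometric series
`E ∑ p^{-nj} = E / (1 - p^{-n})`, whose normalisation by `1 - p^{-n}` is exactly `E`. -/

open Real

lemma one_sub_mul_tsum_geometric_mul_le {r E : ℝ} {f : ℕ → ℝ} (hr₀ : 0 ≤ r) (hr₁ : r ≤ 1)
    (hf₀ : ∀ j, 0 ≤ f j) (hfE : ∀ j, f j ≤ E) :
    (1 - r) * ∑' j, r ^ j * f j ≤ E := by
  rcases hr₁.lt_or_eq with hr₁ | rfl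
  · have hg : HasSum (fun j => r ^ j * E) ((1 - r)⁻¹ * E) :=
      (hasSum_geometric_of_lt_one hr₀ hr₁).mul_right E
    have hle : ∀ j, r ^ j * f j ≤ r ^ j * E :=
      fun j => mul_le_mul_of_nonneg_left (hfE j) (pow_nonneg hr₀ j)
    have hf : Summable fun j => r ^ j * f j :=
      .of_nonneg_of_le (fun j => mul_nonneg (pow_nonneg hr₀ j) (hf₀ j)) hle hg.summable
    calc (1 - r) * ∑' j, r ^ j * f j ≤ (1 - r) * ((1 - r)⁻¹ * E) :=
          mul_le_mul_of_nonneg_left (hasSum_le hle hf.hasSum hg) (by linarith)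
      _ = E := by field_simp
  · simpa using (hf₀ 0).trans (hfE 0)

lemma exp_neg_mul_rpow_neg_le_of_le {t α a b : ℝ} (ht : 0 ≤ t) (hα : 0 ≤ α) (ha : 0 < a)
    (hab : a ≤ b) : exp (-t * a ^ (-α)) ≤ exp (-t * b ^ (-α)) :=
  exp_le_exp.mpr <| mul_le_mul_of_nonpos_left
    (rpow_le_rpow_of_nonpos ha hab (neg_nonpos.mpr hα)) (neg_nonpos.mpr ht)

theorem heat_kernel_nonpos_general (p : ℕ) [Fact p.Prime] (n : ℕ)
    (α t : ℝ) (hα : 0 < α) (ht : 0 < t)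
    (ψ₁ ψ₂ : (Fin n → ℚ_[p]) → ℂ)
    (hΦ : ∀ ξ : Fin n → ℚ_[p], 0 < max ‖ψ₁ ξ‖ ‖ψ₂ ξ‖)
    (hmono₁ : ∀ x y : Fin n → ℚ_[p], ‖x‖ ≤ ‖y‖ → ‖ψ₁ x‖ ≤ ‖ψ₁ y‖)
    (hmono₂ : ∀ x y : Fin n → ℚ_[p], ‖x‖ ≤ ‖y‖ → ‖ψ₂ x‖ ≤ ‖ψ₂ y‖)
    (x : Fin n → ℚ_[p])
    (ξ : ℕ → Fin n → ℚ_[p])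
    (hξ : ∀ j : ℕ, ‖ξ j‖ = ‖x‖⁻¹ * (p : ℝ) ^ (-(j : ℤ)))
    (η : Fin n → ℚ_[p]) (hη : ‖η‖ = ‖x‖⁻¹ * (p : ℝ))
    (Z : ℝ)
    (hZ : Z = ‖x‖ ^ (-(n : ℤ)) *
      ((1 - (p : ℝ) ^ (-(n : ℤ))) *
          (∑' j : ℕ, (p : ℝ) ^ (-((n : ℤ) * (j : ℤ))) *
            Real.exp (-t * (max ‖ψ₁ (ξ j)‖ ‖ψ₂ (ξ j)‖) ^ (-α))) -
        Real.exp (-t * (max ‖ψ₁ η‖ ‖ψ₂ η‖) ^ (-α)))) :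
    Z ≤ 0 := by
  have hp : (1 : ℝ) < p := mod_cast (Fact.out : p.Prime).one_lt
  have hξη (j : ℕ) : ‖ξ j‖ ≤ ‖η‖ := by
    rw [hξ, hη]
    gcongr
    exact (zpow_le_one_of_nonpos₀ hp.le (by simp)).trans hp.le
  have hgeom (j : ℕ) : (p : ℝ) ^ (-((n : ℤ) * j)) = ((p : ℝ) ^ (-(n : ℤ))) ^ j := by
    rw [← zpow_natCast, ← zpow_mul, neg_mul]
  rw [hZ]
  refine mul_nonpos_of_nonneg_of_nonpos (by positivity) (sub_nonpos.mpr ?_)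
  simp_rw [hgeom]
  exact one_sub_mul_tsum_geometric_mul_le (by positivity)
    (zpow_le_one_of_nonpos₀ hp.le (by simp)) (fun _ => (exp_pos _).le)
    fun j => exp_neg_mul_rpow_neg_le_of_le ht.le hα.le (hΦ _)
      (max_le_max (hmono₁ _ _ (hξη j)) (hmono₂ _ _ (hξη j)))

/-- The heat kernel attached to the generalized Bessel potential is
nonpositive away from the origin: with `Φ(ξ) = max {|ψ₁(ξ)|, |ψ₂(ξ)|} > 0` and `|ψ₁|, |ψ₂|`
increasing with respect to the norm, the series representation `Z(x,t)` satisfies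
`Z(x,t) ≤ 0` for `x ≠ 0` and `t > 0`. -/
theorem heat_kernel_nonpos (p : ℕ) [Fact p.Prime] (n : ℕ) (hn : 0 < n)
    (α t : ℝ) (hα : 0 < α) (ht : 0 < t)
    (ψ₁ ψ₂ : (Fin n → ℚ_[p]) → ℂ)
    (hrad₁ : ∀ x y : Fin n → ℚ_[p], ‖x‖ = ‖y‖ → ψ₁ x = ψ₁ y)
    (hrad₂ : ∀ x y : Fin n → ℚ_[p], ‖x‖ = ‖y‖ → ψ₂ x = ψ₂ y)
    (hΦ : ∀ ξ : Fin n → ℚ_[p], 0 < max ‖ψ₁ ξ‖ ‖ψ₂ ξ‖)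
    (hmono₁ : ∀ x y : Fin n → ℚ_[p], ‖x‖ ≤ ‖y‖ → ‖ψ₁ x‖ ≤ ‖ψ₁ y‖)
    (hmono₂ : ∀ x y : Fin n → ℚ_[p], ‖x‖ ≤ ‖y‖ → ‖ψ₂ x‖ ≤ ‖ψ₂ y‖)
    (x : Fin n → ℚ_[p]) (hx : x ≠ 0)
    (ξ : ℕ → Fin n → ℚ_[p])
    (hξ : ∀ j : ℕ, ‖ξ j‖ = ‖x‖⁻¹ * (p : ℝ) ^ (-(j : ℤ)))
    (η : Fin n → ℚ_[p]) (hη : ‖η‖ = ‖x‖⁻¹ * (p : ℝ))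
    (Z : ℝ)
    (hZ : Z = ‖x‖ ^ (-(n : ℤ)) *
      ((1 - (p : ℝ) ^ (-(n : ℤ))) *
          (∑' j : ℕ, (p : ℝ) ^ (-((n : ℤ) * (j : ℤ))) *
            Real.exp (-t * (max ‖ψ₁ (ξ j)‖ ‖ψ₂ (ξ j)‖) ^ (-α))) -
        Real.exp (-t * (max ‖ψ₁ η‖ ‖ψ₂ η‖) ^ (-α)))) :
    Z ≤ 0 :=
  heat_kernel_nonpos_general p n α t hα ht ψ₁ ψ₂ hΦ hmono₁ hmono₂ x ξ hξ η hη Z hZ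
end

section
/- Let a > 0 and β > 0 be real numbers. Then the function ψ : ℚ_p^n → ℂ defined by ψ(ξ) = a‖ξ‖_p^β is negative definite: for every m ≥ 1, all points x_1, …, x_m ∈ ℚ_p^n and all λ_1, …, λ_m ∈ ℂ, the double sum Σ_{i,j=1}^{m} (ψ(x_i) + conj(ψ(x_j)) − ψ(x_i − x_j)) λ_i conj(λ_j) is a nonnegative real number (its imaginary part is zero and its real part is ≥ 0). -/
/-!
In an ultrametric group the open balls `B(0, r)` are subgroups. The indicator of a subgroup is
positive definite (its form is the sum over cosets of `|∑_{xᵢ in the coset} λᵢ|²`), so by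
Schoenberg's observation the step function `ξ ↦ 1 - 1_{B(0,r)}(ξ) = [r ≤ ‖ξ‖]` is negative
definite. On the finitely many norms that enter a given form, a monotone `f` with `f 0 ≥ 0` is a
constant plus a nonnegative combination of such steps, and negative definite functions form a
convex cone; `f t = a t^β` is such a function.
-/

open Finset ComplexConjugate
open scoped ComplexOrder

lemma sum_sum_ite_eq_mul_conj_nonneg {ι Q : Type*} [Fintype ι] [DecidableEq Q] (q : ι → Q)
    (μ : ι → ℂ) : 0 ≤ ∑ i, ∑ j, (if q i = q j then 1 else 0) * μ i * conj (μ j) := by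
  set T : Q → ℂ := fun c => ∑ i, if q i = c then μ i else 0
  have hT : ∑ i, ∑ j, (if q i = q j then 1 else 0) * μ i * conj (μ j)
      = ∑ c ∈ univ.image q, T c * conj (T c) := by
    simp only [T, map_sum, sum_mul_sum, apply_ite (starRingEnd ℂ), map_zero]
    simp only [sum_comm (s := univ.image q)]
    refine sum_congr rfl fun i _ => sum_congr rfl fun j _ => ?_
    rw [sum_eq_single_of_mem (q i) (mem_image_of_mem q (mem_univ i))
      fun c _ hc => by simp [Ne.symm hc]]
    simp [ite_mul, eq_comm]
  rw [hT]
  exact sum_nonneg fun c _ => mul_star_self_nonneg (T c)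

section NegativeDefinite

variable {G : Type*} [AddCommGroup G]

def negDefForm (ψ : G → ℂ) {m : ℕ} (x : Fin m → G) (lam : Fin m → ℂ) : ℂ :=
  ∑ i, ∑ j, (ψ (x i) + conj (ψ (x j)) - ψ (x i - x j)) * lam i * conj (lam j)

def IsNegDef (ψ : G → ℂ) : Prop :=
  ∀ (m : ℕ) (x : Fin m → G) (lam : Fin m → ℂ), 0 ≤ negDefForm ψ x lam

def IsPosDef (φ : G → ℂ) : Prop :=
  ∀ (m : ℕ) (x : Fin m → G) (μ : Fin m → ℂ), 0 ≤ ∑ i, ∑ j, φ (x i - x j) * μ i * conj (μ j)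

lemma negDefForm_congr {ψ ψ' : G → ℂ} {m : ℕ} (x : Fin m → G) (lam : Fin m → ℂ)
    (h : ∀ i, ψ (x i) = ψ' (x i)) (h' : ∀ i j, ψ (x i - x j) = ψ' (x i - x j)) :
    negDefForm ψ x lam = negDefForm ψ' x lam := by
  simp only [negDefForm, h, h']

lemma negDefForm_add (ψ ψ' : G → ℂ) {m : ℕ} (x : Fin m → G) (lam : Fin m → ℂ) :
    negDefForm (fun ξ => ψ ξ + ψ' ξ) x lam = negDefForm ψ x lam + negDefForm ψ' x lam := by
  simp only [negDefForm, ← sum_add_distrib, map_add]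
  exact sum_congr rfl fun i _ => sum_congr rfl fun j _ => by ring

lemma negDefForm_ofReal_mul (c : ℝ) (ψ : G → ℂ) {m : ℕ} (x : Fin m → G) (lam : Fin m → ℂ) :
    negDefForm (fun ξ => c * ψ ξ) x lam = c * negDefForm ψ x lam := by
  simp only [negDefForm, mul_sum, map_mul, Complex.conj_ofReal]
  exact sum_congr rfl fun i _ => sum_congr rfl fun j _ => by ring

lemma negDefForm_const (c : ℝ) {m : ℕ} (x : Fin m → G) (lam : Fin m → ℂ) :
    negDefForm (fun _ => (c : ℂ)) x lam = c * ((∑ i, lam i) * conj (∑ i, lam i)) := by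
  rw [map_sum, sum_mul_sum, mul_sum]
  simp only [negDefForm, Complex.conj_ofReal, add_sub_cancel_right, mul_sum]
  exact sum_congr rfl fun i _ => sum_congr rfl fun j _ => by ring

lemma isNegDef_const {c : ℝ} (hc : 0 ≤ c) : IsNegDef (fun _ : G => (c : ℂ)) := fun m x lam => by
  rw [negDefForm_const]
  exact mul_nonneg (by exact_mod_cast hc) (mul_star_self_nonneg _)

lemma IsNegDef.add {ψ ψ' : G → ℂ} (hψ : IsNegDef ψ) (hψ' : IsNegDef ψ') :
    IsNegDef (fun ξ => ψ ξ + ψ' ξ) :=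
  fun m x lam => by rw [negDefForm_add]; exact add_nonneg (hψ m x lam) (hψ' m x lam)

lemma IsNegDef.ofReal_mul {ψ : G → ℂ} (hψ : IsNegDef ψ) {c : ℝ} (hc : 0 ≤ c) :
    IsNegDef (fun ξ => c * ψ ξ) := fun m x lam => by
  rw [negDefForm_ofReal_mul]
  exact mul_nonneg (by exact_mod_cast hc) (hψ m x lam)

lemma isNegDef_sum {ι : Type*} (s : Finset ι) {ψ : ι → G → ℂ} (hψ : ∀ k ∈ s, IsNegDef (ψ k)) :
    IsNegDef (fun ξ => ∑ k ∈ s, ψ k ξ) := by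
  classical
  induction s using Finset.induction_on with
  | empty => exact fun m x lam => by simp [negDefForm]
  | insert k s hk ih =>
    simp only [sum_insert hk]
    exact (hψ k (mem_insert_self k s)).add (ih fun l hl => hψ l (mem_insert_of_mem hl))

/-- Schoenberg's observation: `φ(0) - φ` is the restriction of the form of `φ` to the points
`0, x₁, …, x_m` with coefficients `-∑ λᵢ, λ₁, …, λ_m`. -/
lemma IsPosDef.isNegDef_sub {φ : G → ℂ} (hφ : IsPosDef φ) (hφ_neg : ∀ ξ, φ (-ξ) = conj (φ ξ)) :
    IsNegDef (fun ξ => φ 0 - φ ξ) := fun m x lam => by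
  have h0 : conj (φ 0) = φ 0 := by simpa using (hφ_neg 0).symm
  convert hφ (m + 1) (Fin.cons 0 x) (Fin.cons (-∑ i, lam i) lam) using 1
  simp only [negDefForm, Fin.sum_univ_succ, Fin.cons_zero, Fin.cons_succ, zero_sub, sub_zero,
    hφ_neg, map_sub, h0, map_neg]
  have hL : ∑ i, conj (lam i) = conj (∑ i, lam i) := (map_sum _ _ _).symm
  have hsummand : ∀ i j, (φ 0 - φ (x i) + (φ 0 - conj (φ (x j))) - (φ 0 - φ (x i - x j))) * lam i
      * conj (lam j) = lam i * (φ 0 * conj (lam j)) - φ (x i) * lam i * conj (lam j)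
        - lam i * (conj (φ (x j)) * conj (lam j)) + φ (x i - x j) * lam i * conj (lam j) :=
    fun i j => by ring
  have hcross : ∑ j, conj (φ (x j)) * -(∑ i, lam i) * conj (lam j)
      = -((∑ i, lam i) * ∑ j, conj (φ (x j)) * conj (lam j)) := by
    rw [eq_neg_iff_add_eq_zero, mul_sum univ (fun j => conj (φ (x j)) * conj (lam j)),
      ← sum_add_distrib]
    exact sum_eq_zero fun j _ => by ring
  simp only [hsummand, sum_add_distrib, sum_sub_distrib, ← mul_sum, ← sum_mul, hL, hcross]
  ring

lemma isPosDef_indicator_addSubgroup (H : AddSubgroup G) :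
    IsPosDef ((H : Set G).indicator 1 : G → ℂ) := fun m x μ => by
  classical
  convert sum_sum_ite_eq_mul_conj_nonneg (fun i => (x i : G ⧸ H)) μ using 5 with i _ j _
  simp [Set.indicator_apply, QuotientAddGroup.eq_iff_sub_mem]

lemma isNegDef_one_sub_indicator_addSubgroup (H : AddSubgroup G) :
    IsNegDef (fun ξ => 1 - (H : Set G).indicator (1 : G → ℂ) ξ) := by
  convert (isPosDef_indicator_addSubgroup H).isNegDef_sub fun ξ => ?_ using 2
  · rw [Set.indicator_of_mem (SetLike.mem_coe.2 H.zero_mem), Pi.one_apply]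
  · by_cases hξ : ξ ∈ H <;> simp [hξ]

end NegativeDefinite

lemma MonotoneOn.exists_eq_add_sum_ite_le {f : ℝ → ℝ} (hf : MonotoneOn f (Set.Ici 0))
    (V : Finset ℝ) (hV : ∀ v ∈ V, 0 < v) :
    ∃ c : ℝ → ℝ, (∀ v, 0 ≤ c v) ∧
      ∀ t ∈ insert 0 V, f t = f 0 + ∑ v ∈ V, c v * if v ≤ t then 1 else 0 := by
  induction V using Finset.induction_on_max with
  | empty => exact ⟨0, fun _ => le_rfl, by simp⟩
  | insert a V hlt ih =>
    obtain ⟨c, hc, hcV⟩ := ih fun v hv => hV v (mem_insert_of_mem hv)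
    set M := (insert 0 V).max' (insert_nonempty 0 V)
    have hM : M ∈ insert 0 V := max'_mem _ _
    have hM0 : 0 ≤ M := le_max' _ 0 (mem_insert_self 0 V)
    have hMa : M < a := by
      rcases mem_insert.1 hM with h | h
      · exact h ▸ hV a (mem_insert_self a V)
      · exact hlt M h
    have haV : a ∉ V := fun h => (hlt a h).false
    refine ⟨Function.update c a (f a - f M), fun v => ?_, fun t ht => ?_⟩
    · rcases eq_or_ne v a with rfl | hv
      · simpa using hf hM0 (hM0.trans hMa.le) hMa.le
      · simpa [hv] using hc v
    have hsum : ∀ t, ∑ v ∈ V, Function.update c a (f a - f M) v * (if v ≤ t then 1 else 0)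
        = ∑ v ∈ V, c v * if v ≤ t then 1 else 0 := fun t =>
      sum_congr rfl fun v hv => by rw [Function.update_of_ne (ne_of_mem_of_not_mem hv haV)]
    rw [sum_insert haV, hsum, Function.update_self]
    rw [insert_comm, mem_insert] at ht
    rcases ht with rfl | ht
    · have hle : ∀ v ∈ V, v ≤ M := fun v hv => le_max' _ v (mem_insert_of_mem hv)
      have hsumM : ∑ v ∈ V, c v * (if v ≤ t then 1 else 0)
          = ∑ v ∈ V, c v * if v ≤ M then 1 else 0 :=
        sum_congr rfl fun v hv => by rw [if_pos (hlt v hv).le, if_pos (hle v hv)]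
      rw [if_pos le_rfl, hsumM]
      linarith [hcV M hM]
    · have htM : t ≤ M := le_max' _ t ht
      rw [if_neg (htM.trans_lt hMa).not_ge, hcV t ht]
      ring

lemma isNegDef_ite_le_norm {G : Type*} [SeminormedAddCommGroup G] [IsUltrametricDist G] {r : ℝ}
    (hr : 0 < r) : IsNegDef (fun ξ : G => if r ≤ ‖ξ‖ then 1 else 0) := by
  convert isNegDef_one_sub_indicator_addSubgroup
    (IsUltrametricDist.ball_openAddSubgroup G hr).toAddSubgroup using 2 with ξ
  by_cases hξ : r ≤ ‖ξ‖
  · simp [IsUltrametricDist.ball_openAddSubgroup, hξ]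
  · simp [IsUltrametricDist.ball_openAddSubgroup, hξ,
      Set.indicator_of_mem (mem_ball_zero_iff.2 (not_le.1 hξ))]

theorem isNegDef_comp_norm {G : Type*} [SeminormedAddCommGroup G] [IsUltrametricDist G]
    {f : ℝ → ℝ} (hf : MonotoneOn f (Set.Ici 0)) (hf0 : 0 ≤ f 0) :
    IsNegDef (fun ξ : G => (f ‖ξ‖ : ℂ)) := by
  intro m x lam
  classical
  set S : Finset ℝ :=
    (univ.image fun i => ‖x i‖) ∪ univ.image fun ij : Fin m × Fin m => ‖x ij.1 - x ij.2‖
  obtain ⟨c, hc, hfc⟩ :=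
    hf.exists_eq_add_sum_ite_le (S.filter (0 < ·)) fun v hv => (mem_filter.1 hv).2
  set ψ : G → ℂ := fun ξ => f 0 + ∑ v ∈ S.filter (0 < ·), (c v : ℂ) * if v ≤ ‖ξ‖ then 1 else 0
  have hrep : ∀ ξ : G, ‖ξ‖ ∈ S → (f ‖ξ‖ : ℂ) = ψ ξ := by
    intro ξ hξ
    have hmem : ‖ξ‖ ∈ insert 0 (S.filter (0 < ·)) := by
      rcases (norm_nonneg ξ).eq_or_lt with h | h
      · exact h ▸ mem_insert_self _ _
      · exact mem_insert_of_mem (mem_filter.2 ⟨hξ, h⟩)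
    simp [ψ, hfc _ hmem, apply_ite]
  rw [negDefForm_congr x lam (fun i => hrep _ (mem_union_left _ (mem_image_of_mem _ (mem_univ i))))
    fun i j => hrep (x i - x j) (mem_union_right _ (mem_image_of_mem _ (mem_univ (i, j))))]
  exact ((isNegDef_const hf0).add (isNegDef_sum _ fun v hv =>
    (isNegDef_ite_le_norm (mem_filter.1 hv).2).ofReal_mul (hc v))) m x lam

theorem norm_rpow_negative_definite_general (p : ℕ) [Fact p.Prime] (n : ℕ)
    (a β : ℝ) (ha : 0 < a) (hβ : 0 < β)
    (ψ : (Fin n → ℚ_[p]) → ℂ)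
    (hψ : ∀ ξ : Fin n → ℚ_[p], ψ ξ = ((a * ‖ξ‖ ^ β : ℝ) : ℂ)) :
    ∀ (m : ℕ), 1 ≤ m → ∀ (x : Fin m → Fin n → ℚ_[p]) (lam : Fin m → ℂ),
      (∑ i : Fin m, ∑ j : Fin m,
          (ψ (x i) + starRingEnd ℂ (ψ (x j)) - ψ (x i - x j)) * lam i *
            starRingEnd ℂ (lam j)).im = 0 ∧
      0 ≤ (∑ i : Fin m, ∑ j : Fin m,
          (ψ (x i) + starRingEnd ℂ (ψ (x j)) - ψ (x i - x j)) * lam i *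
            starRingEnd ℂ (lam j)).re := by
  intro m _ x lam
  have hform := isNegDef_comp_norm (G := Fin n → ℚ_[p]) (f := fun t => a * t ^ β)
    (fun s hs t ht hst => mul_le_mul_of_nonneg_left
      (Real.monotoneOn_rpow_Ici_of_exponent_nonneg hβ.le hs ht hst) ha.le) (by positivity) m x lam
  rw [← funext hψ, Complex.nonneg_iff] at hform
  exact ⟨hform.2.symm, hform.1⟩

/-- For real `a > 0`, `β > 0`, the function `ψ(ξ) = a ‖ξ‖_p^β` is
negative definite on `ℚ_p^n`: for every `m ≥ 1`, all `x₁, …, x_m ∈ ℚ_p^n` and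
`λ₁, …, λ_m ∈ ℂ`, the sum `Σ_{i,j} (ψ(x_i) + conj(ψ(x_j)) − ψ(x_i − x_j)) λ_i conj(λ_j)`
is a nonnegative real number. -/
theorem norm_rpow_negative_definite (p : ℕ) [Fact p.Prime] (n : ℕ) (hn : 0 < n)
    (a β : ℝ) (ha : 0 < a) (hβ : 0 < β)
    (ψ : (Fin n → ℚ_[p]) → ℂ)
    (hψ : ∀ ξ : Fin n → ℚ_[p], ψ ξ = ((a * ‖ξ‖ ^ β : ℝ) : ℂ)) :
    ∀ (m : ℕ), 1 ≤ m → ∀ (x : Fin m → Fin n → ℚ_[p]) (lam : Fin m → ℂ),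
      (∑ i : Fin m, ∑ j : Fin m,
          (ψ (x i) + starRingEnd ℂ (ψ (x j)) - ψ (x i - x j)) * lam i *
            starRingEnd ℂ (lam j)).im = 0 ∧
      0 ≤ (∑ i : Fin m, ∑ j : Fin m,
          (ψ (x i) + starRingEnd ℂ (ψ (x j)) - ψ (x i - x j)) * lam i *
            starRingEnd ℂ (lam j)).re :=
  norm_rpow_negative_definite_general p n a β ha hβ ψ hψ
end

section
/- Let f ∈ ℚ_p[ξ_1, …, ξ_n] be an elliptic polynomial of degree d ≥ 1, i.e. f is homogeneous of degree d and f(ξ) = 0 if and only if ξ = 0. Then there exist positive real constants C₀ and C₁ (depending on f) such that C₀ ‖ξ‖_p^d ≤ |f(ξ)|_p ≤ C₁ ‖ξ‖_p^d for every ξ ∈ ℚ_p^n. -/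
/-!
Homogeneity gives `|f(c • η)| = |c|^d |f(η)|`, and every nonzero `ξ` is `c • η` with
`|c| = ‖ξ‖` and `‖η‖ = 1`, taking `c` a coordinate of `ξ` where the sup norm is attained.
So it suffices to bound `|f|` above and away from zero on the compact unit sphere, where it
is continuous and, by ellipticity, positive.
-/

open MvPolynomial Metric

theorem MvPolynomial.IsHomogeneous.eval_smul {R σ : Type*} [CommSemiring R]
    {φ : MvPolynomial σ R} {d : ℕ} (hφ : φ.IsHomogeneous d) (c : R) (x : σ → R) :
    eval (c • x) φ = c ^ d * eval x φ := by
  rw [eval_eq, eval_eq, Finset.mul_sum]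
  refine Finset.sum_congr rfl fun m hm => ?_
  have hdeg : m.sum (fun _ e => e) = d := by
    simpa [Finsupp.weight_apply, Finsupp.sum] using hφ (mem_support_iff.mp hm)
  simp only [Pi.smul_apply, smul_eq_mul, mul_pow, Finset.prod_mul_distrib,
    Finset.prod_pow_eq_pow_sum, ← hdeg, Finsupp.sum]
  ring

theorem MvPolynomial.IsHomogeneous.eval_zero {R σ : Type*} [CommSemiring R]
    {φ : MvPolynomial σ R} {d : ℕ} (hφ : φ.IsHomogeneous d) (hd : d ≠ 0) :
    eval 0 φ = 0 := by
  simpa [zero_pow hd] using hφ.eval_smul 0 0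

section

variable {K ι : Type*} [NormedField K] [Fintype ι]

theorem exists_eq_smul_mem_sphere_of_ne_zero {ξ : ι → K} (hξ : ξ ≠ 0) :
    ∃ c : K, ‖c‖ = ‖ξ‖ ∧ ∃ η ∈ sphere (0 : ι → K) 1, ξ = c • η := by
  obtain ⟨i, -⟩ := Function.ne_iff.mp hξ
  have : Nonempty ι := ⟨i⟩
  obtain ⟨⟨j, hj : ‖ξ j‖ = ‖ξ‖⟩, -⟩ := IsGreatest.pi_norm ξ
  have hξj : ξ j ≠ 0 := norm_ne_zero_iff.mp (hj ▸ norm_ne_zero_iff.mpr hξ)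
  refine ⟨ξ j, hj, (ξ j)⁻¹ • ξ, ?_, (smul_inv_smul₀ hξj ξ).symm⟩
  rw [mem_sphere_zero_iff_norm, norm_smul, norm_inv, hj,
    inv_mul_cancel₀ (norm_ne_zero_iff.mpr hξ)]

namespace MvPolynomial.IsHomogeneous

variable {f : MvPolynomial ι K} {d : ℕ}

theorem exists_norm_eval_eq_norm_pow_mul (hf : f.IsHomogeneous d) {ξ : ι → K} (hξ : ξ ≠ 0) :
    ∃ η ∈ sphere (0 : ι → K) 1, ‖eval ξ f‖ = ‖ξ‖ ^ d * ‖eval η f‖ := by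
  obtain ⟨c, hc, η, hη, rfl⟩ := exists_eq_smul_mem_sphere_of_ne_zero hξ
  refine ⟨η, hη, ?_⟩
  rw [hf.eval_smul, norm_mul, norm_pow, hc]

variable [ProperSpace K]

theorem exists_norm_eval_le_mul_norm_pow (hf : f.IsHomogeneous d) (hd : d ≠ 0) :
    ∃ C > 0, ∀ ξ : ι → K, ‖eval ξ f‖ ≤ C * ‖ξ‖ ^ d := by
  obtain ⟨C, hC⟩ :=
    (isCompact_sphere (0 : ι → K) 1).exists_bound_of_continuousOn (continuous_eval f).continuousOn
  refine ⟨max C 1, by positivity, fun ξ => ?_⟩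
  rcases eq_or_ne ξ 0 with rfl | hξ
  · rw [hf.eval_zero hd]
    simp [zero_pow hd]
  obtain ⟨η, hη, heq⟩ := hf.exists_norm_eval_eq_norm_pow_mul hξ
  rw [heq, mul_comm]
  gcongr
  exact (hC η hη).trans (le_max_left _ _)

theorem exists_mul_norm_pow_le_norm_eval (hf : f.IsHomogeneous d) (hd : d ≠ 0)
    (hf₀ : ∀ ξ, eval ξ f = 0 → ξ = 0) :
    ∃ C > 0, ∀ ξ : ι → K, C * ‖ξ‖ ^ d ≤ ‖eval ξ f‖ := by
  have hpos : ∀ η ∈ sphere (0 : ι → K) 1, 0 < ‖eval η f‖ := fun η hη =>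
    norm_pos_iff.mpr fun h => by simp [hf₀ η h] at hη
  obtain ⟨C, hC₀, hC⟩ := (isCompact_sphere (0 : ι → K) 1).exists_forall_le'
    (continuous_eval f).norm.continuousOn hpos
  refine ⟨C, hC₀, fun ξ => ?_⟩
  rcases eq_or_ne ξ 0 with rfl | hξ
  · rw [hf.eval_zero hd]
    simp [zero_pow hd]
  obtain ⟨η, hη, heq⟩ := hf.exists_norm_eval_eq_norm_pow_mul hξ
  rw [heq, mul_comm]
  gcongr
  exact hC η hη

end MvPolynomial.IsHomogeneous

end

theorem elliptic_polynomial_norm_bounds_general (p : ℕ) [Fact p.Prime] (n : ℕ)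
    (d : ℕ) (hd : 1 ≤ d)
    (f : MvPolynomial (Fin n) ℚ_[p])
    (hhom : f.IsHomogeneous d)
    (hell : ∀ ξ : Fin n → ℚ_[p], MvPolynomial.eval ξ f = 0 ↔ ξ = 0) :
    ∃ C₀ C₁ : ℝ, 0 < C₀ ∧ 0 < C₁ ∧
      ∀ ξ : Fin n → ℚ_[p],
        C₀ * ‖ξ‖ ^ d ≤ ‖MvPolynomial.eval ξ f‖ ∧
        ‖MvPolynomial.eval ξ f‖ ≤ C₁ * ‖ξ‖ ^ d := by
  have hd₀ : d ≠ 0 := Nat.one_le_iff_ne_zero.mp hd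
  obtain ⟨C₀, hC₀, hlower⟩ := hhom.exists_mul_norm_pow_le_norm_eval hd₀ fun ξ => (hell ξ).mp
  obtain ⟨C₁, hC₁, hupper⟩ := hhom.exists_norm_eval_le_mul_norm_pow hd₀
  exact ⟨C₀, C₁, hC₀, hC₁, fun ξ => ⟨hlower ξ, hupper ξ⟩⟩

/-- If `f ∈ ℚ_p[ξ₁, …, ξ_n]` is an elliptic polynomial of degree
`d ≥ 1` (homogeneous of degree `d` and vanishing only at `0`), then there are positive
constants `C₀, C₁` with `C₀ ‖ξ‖_p^d ≤ |f(ξ)|_p ≤ C₁ ‖ξ‖_p^d` for all `ξ ∈ ℚ_p^n`. -/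
theorem elliptic_polynomial_norm_bounds (p : ℕ) [Fact p.Prime] (n : ℕ) (hn : 0 < n)
    (d : ℕ) (hd : 1 ≤ d)
    (f : MvPolynomial (Fin n) ℚ_[p])
    (hhom : f.IsHomogeneous d)
    (hell : ∀ ξ : Fin n → ℚ_[p], MvPolynomial.eval ξ f = 0 ↔ ξ = 0) :
    ∃ C₀ C₁ : ℝ, 0 < C₀ ∧ 0 < C₁ ∧
      ∀ ξ : Fin n → ℚ_[p],
        C₀ * ‖ξ‖ ^ d ≤ ‖MvPolynomial.eval ξ f‖ ∧
        ‖MvPolynomial.eval ξ f‖ ≤ C₁ * ‖ξ‖ ^ d :=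
  elliptic_polynomial_norm_bounds_general p n d hd f hhom hell
end
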